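/- Let C be a self-dual code of length n over Z_{2^m}, s ∈ (Z_{2^m})^n \ C with Im(ψ_s) = {0, 2^{m−1}} and s·s ≡ 0 (mod 2^m). With C_0 = ker ψ_s, C_1 = s + C_0, C_2 = t + C_0 (t ∈ C \ C_0), C_3 = s + t + C_0: for any x ∈ C_1 and y ∈ C_1, x·y ≡ 0 (mod 2^m); for x ∈ C_1, y ∈ C_2, x·y ≡ 2^{m−1} (mod 2^m); for x ∈ C_1, y ∈ C_3, x·y ≡ 2^{m−1} (mod 2^m); for x, y ∈ C_3, x·y ≡ 0 (mod 2^m). -/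
import Mathlib


open Finset

/-- Standard bilinear (dot) product on `Fin n → R`. -/
def dotp {R : Type*} [CommRing R] {n : ℕ} (u v : Fin n → R) : R := ∑ i, u i * v i

/-- Dual of a set of vectors with respect to the standard bilinear form. -/
def dualCode {R : Type*} [CommRing R] {n : ℕ} (S : Set (Fin n → R)) : Set (Fin n → R) :=
  {v | ∀ u ∈ S, dotp u v = 0}

/-- Euclidean weight of an element of `ZMod N`. -/
def wtE {N : ℕ} (a : ZMod N) : ℕ := min (a.val ^ 2) ((N - a.val) ^ 2)

/-- Euclidean weight of a vector. -/
def wtEv {N n : ℕ} (v : Fin n → ZMod N) : ℕ := ∑ i, wtE (v i)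

/-- Kernel of the map `u ↦ u ⬝ s` on a code `C` (as a set). -/
def kerSet (m n : ℕ) (C : AddSubgroup (Fin n → ZMod (2 ^ m)))
    (s : Fin n → ZMod (2 ^ m)) : Set (Fin n → ZMod (2 ^ m)) :=
  {u | u ∈ C ∧ dotp u s = 0}


lemma dotp_comm' {R : Type*} [CommRing R] {n : ℕ} (u v : Fin n → R) :
    dotp u v = dotp v u := by
  unfold dotp; exact Finset.sum_congr rfl (fun i _ => mul_comm _ _)

lemma dotp_add_left' {R : Type*} [CommRing R] {n : ℕ} (u v w : Fin n → R) :
    dotp (u + v) w = dotp u w + dotp v w := by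
  unfold dotp
  rw [← Finset.sum_add_distrib]
  exact Finset.sum_congr rfl (fun i _ => by simp [add_mul])

lemma dotp_add_right' {R : Type*} [CommRing R] {n : ℕ} (u v w : Fin n → R) :
    dotp u (v + w) = dotp u v + dotp u w := by
  rw [dotp_comm', dotp_add_left', dotp_comm' v, dotp_comm' w]

theorem gen_shadow_orth_zero (m n : ℕ) (hm : 0 < m) (hn : 0 < n)
    (C : AddSubgroup (Fin n → ZMod (2 ^ m)))
    (hC : (C : Set (Fin n → ZMod (2 ^ m))) = dualCode (C : Set (Fin n → ZMod (2 ^ m))))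
    (s : Fin n → ZMod (2 ^ m)) (hsC : s ∉ C)
    (hIm : (fun u => dotp u s) '' (C : Set (Fin n → ZMod (2 ^ m)))
      = {0, (2 ^ (m - 1) : ZMod (2 ^ m))})
    (hss : dotp s s = 0)
    (t : Fin n → ZMod (2 ^ m)) (ht : t ∈ C) (ht0 : dotp t s ≠ 0) :
    (∀ x ∈ (s + ·) '' kerSet m n C s, ∀ y ∈ (s + ·) '' kerSet m n C s,
      dotp x y = 0) ∧
    (∀ x ∈ (s + ·) '' kerSet m n C s, ∀ y ∈ (t + ·) '' kerSet m n C s,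
      dotp x y = (2 ^ (m - 1) : ZMod (2 ^ m))) ∧
    (∀ x ∈ (s + ·) '' kerSet m n C s, ∀ y ∈ (s + t + ·) '' kerSet m n C s,
      dotp x y = (2 ^ (m - 1) : ZMod (2 ^ m))) ∧
    (∀ x ∈ (s + t + ·) '' kerSet m n C s, ∀ y ∈ (s + t + ·) '' kerSet m n C s,
      dotp x y = 0) := by
  have p2 : (2 ^ (m - 1) : ZMod (2 ^ m)) + 2 ^ (m - 1) = 0 := by
    have : (2 : ZMod (2 ^ m)) ^ (m - 1) + 2 ^ (m - 1) = 2 ^ m := by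
      rw [← two_mul, ← pow_succ']
      congr 1; omega
    rw [this]
    exact_mod_cast ZMod.natCast_self (2 ^ m)
  have hself : ∀ u ∈ C, ∀ v ∈ C, dotp u v = 0 := by
    intro u hu v hv
    have : v ∈ dualCode (C : Set (Fin n → ZMod (2 ^ m))) := hC ▸ hv
    exact this u hu
  have hts : dotp t s = 2 ^ (m - 1) := by
    have : dotp t s ∈ ({0, (2 ^ (m - 1) : ZMod (2 ^ m))} : Set _) := by
      rw [← hIm]; exact ⟨t, ht, rfl⟩
    rcases this with h | h
    · exact absurd h ht0
    · exact h
  have hst : dotp s t = 2 ^ (m - 1) := by rw [dotp_comm']; exact hts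
  have htt : dotp t t = 0 := hself t ht t ht
  -- facts about kernel elements
  have hks : ∀ a ∈ kerSet m n C s, dotp s a = 0 := fun a ha => by
    rw [dotp_comm']; exact ha.2
  have hkt : ∀ a ∈ kerSet m n C s, dotp a t = 0 := fun a ha => hself a ha.1 t ht
  have htk : ∀ a ∈ kerSet m n C s, dotp t a = 0 := fun a ha => by
    rw [dotp_comm']; exact hkt a ha
  have hkk : ∀ a ∈ kerSet m n C s, ∀ b ∈ kerSet m n C s, dotp a b = 0 :=
    fun a ha b hb => hself a ha.1 b hb.1
  refine ⟨?_, ?_, ?_, ?_⟩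
  · rintro x ⟨a, ha, rfl⟩ y ⟨b, hb, rfl⟩
    simp only [dotp_add_left', dotp_add_right']
    rw [hss, hks b hb, ha.2, hkk a ha b hb]; ring
  · rintro x ⟨a, ha, rfl⟩ y ⟨b, hb, rfl⟩
    simp only [dotp_add_left', dotp_add_right']
    rw [hst, hks b hb, hkt a ha, hkk a ha b hb]; ring
  · rintro x ⟨a, ha, rfl⟩ y ⟨b, hb, rfl⟩
    simp only [dotp_add_left', dotp_add_right']
    rw [hss, hst, hks b hb, ha.2, hkt a ha, hkk a ha b hb]; ring
  · rintro x ⟨a, ha, rfl⟩ y ⟨b, hb, rfl⟩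
    simp only [dotp_add_left', dotp_add_right']
    rw [hss, hst, hks b hb, hts, htt, htk b hb, ha.2, hkt a ha, hkk a ha b hb]
    linear_combination p2
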